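/- The space B̃V^{p(·)}(Ω) equipped with the norm ‖u‖_{B̃V^{p(·)}} := ‖u‖_{p(·)} + inf{λ > 0 : ρ̃_{BV^{p(·)}(Ω)}(u/λ) ≤ 1} is a Banach space: every Cauchy sequence in B̃V^{p(·)}(Ω) converges in this norm to an element of B̃V^{p(·)}(Ω). -/

import Mathlib

open MeasureTheory Filter Topology ENNReal Set

noncomputable section

/-- Euclidean space `ℝⁿ`. -/
abbrev Eu (n : ℕ) : Type := EuclideanSpace ℝ (Fin n)

/-- The modular `ρ_{p(·)}(u) = ∫_Ω |u|^{p(x)} dx`. -/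
def vModular {n : ℕ} (p : Eu n → ℝ) (Ω : Set (Eu n)) (u : Eu n → ℝ) : ℝ≥0∞ :=
  ∫⁻ x in Ω, ENNReal.ofReal (|u x| ^ p x)

/-- The gradient modular `∫_Ω |∇u|^{p(x)} dx` (for a.e. differentiable `u`,
`fderiv` is the gradient). -/
def gradModular {n : ℕ} (p : Eu n → ℝ) (Ω : Set (Eu n)) (u : Eu n → ℝ) : ℝ≥0∞ :=
  ∫⁻ x in Ω, ENNReal.ofReal (‖fderiv ℝ u x‖ ^ p x)

/-- Membership in the variable exponent Lebesgue space `L^{p(·)}(Ω)`. -/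
def MemLpVar {n : ℕ} (p : Eu n → ℝ) (Ω : Set (Eu n)) (u : Eu n → ℝ) : Prop :=
  Measurable u ∧ ∃ l : ℝ, 0 < l ∧ vModular p Ω (fun x => u x / l) < ⊤

/-- The Luxemburg norm on `L^{p(·)}(Ω)`. -/
def luxNorm {n : ℕ} (p : Eu n → ℝ) (Ω : Set (Eu n)) (u : Eu n → ℝ) : ℝ :=
  sInf {l : ℝ | 0 < l ∧ vModular p Ω (fun x => u x / l) ≤ 1}

/-- Convergence `v i → u` in `L^{p(·)}(Ω)` (Luxemburg norm convergence). -/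
def LpTendsto {n : ℕ} (p : Eu n → ℝ) (Ω : Set (Eu n)) (v : ℕ → Eu n → ℝ)
    (u : Eu n → ℝ) : Prop :=
  Tendsto (fun i => luxNorm p Ω (fun x => v i x - u x)) atTop (𝓝 0)

/-- `u` is locally Lipschitz on `Ω`. -/
def LocLipOn {n : ℕ} (Ω : Set (Eu n)) (u : Eu n → ℝ) : Prop :=
  ∀ x ∈ Ω, ∃ K : NNReal, ∃ t ∈ 𝓝[Ω] x, LipschitzOnWith K u t

/-- The relaxed mixed pseudo-modular `ρ̃_{BV^{p(·)}(Ω)}(u)`: the infimum of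
`liminf_i ∫_Ω |∇u_i|^{p(x)} dx` over all sequences of locally Lipschitz functions
in `L^{p(·)}(Ω)` converging to `u` in `L^{p(·)}(Ω)`. -/
def bvModular {n : ℕ} (p : Eu n → ℝ) (Ω : Set (Eu n)) (u : Eu n → ℝ) : ℝ≥0∞ :=
  ⨅ (v : ℕ → Eu n → ℝ)
    (_ : (∀ i, LocLipOn Ω (v i) ∧ MemLpVar p Ω (v i)) ∧ LpTendsto p Ω v u),
    Filter.liminf (fun i => gradModular p Ω (v i)) atTop

/-- Membership in the mixed space `B̃V^{p(·)}(Ω)`. -/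
def MemBVt {n : ℕ} (p : Eu n → ℝ) (Ω : Set (Eu n)) (u : Eu n → ℝ) : Prop :=
  MemLpVar p Ω u ∧ bvModular p Ω u < ⊤

/-- The norm `‖u‖_{B̃V^{p(·)}}`. -/
def bvNorm {n : ℕ} (p : Eu n → ℝ) (Ω : Set (Eu n)) (u : Eu n → ℝ) : ℝ :=
  luxNorm p Ω u + sInf {l : ℝ | 0 < l ∧ bvModular p Ω (fun x => u x / l) ≤ 1}

/-- The admissible class `Ã(E)` for the mixed capacity. -/
def admissibleBV {n : ℕ} (p : Eu n → ℝ) (Ω E : Set (Eu n)) : Set (Eu n → ℝ) :=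
  {u | MemBVt p Ω u ∧ (∀ x ∈ Ω, 0 ≤ u x ∧ u x ≤ 1) ∧
       ∃ U : Set (Eu n), IsOpen U ∧ E ⊆ U ∧ ∀ x ∈ U ∩ Ω, u x = 1}

/-- The mixed BV-Sobolev capacity `C̃_{BV^{p(·)}}(E)` (with `inf ∅ = ∞`). -/
def bvCapacity {n : ℕ} (p : Eu n → ℝ) (Ω E : Set (Eu n)) : ℝ≥0∞ :=
  ⨅ (u : Eu n → ℝ) (_ : u ∈ admissibleBV p Ω E), vModular p Ω u + bvModular p Ω u

/-- Divergence of a vector field. -/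
def divg {n : ℕ} (φ : Eu n → Eu n) (x : Eu n) : ℝ :=
  ∑ i, fderiv ℝ φ x (EuclideanSpace.single i 1) i

/-- Total variation `‖Du‖(U)` on an open set `U`, via the defining supremum over
`C¹` vector fields compactly supported in `U` with `|φ| ≤ 1`. -/
def totVarOpen {n : ℕ} (U : Set (Eu n)) (u : Eu n → ℝ) : ℝ≥0∞ :=
  ⨆ (φ : Eu n → Eu n)
    (_ : ContDiff ℝ 1 φ ∧ HasCompactSupport φ ∧ tsupport φ ⊆ U ∧ ∀ x, ‖φ x‖ ≤ 1),
    ENNReal.ofReal (∫ x in U, u x * divg φ x)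

/-- Total variation `‖Du‖(A)` of a set `A ⊆ Ω`, extended from open sets. -/
def totVarIn {n : ℕ} (Ω A : Set (Eu n)) (u : Eu n → ℝ) : ℝ≥0∞ :=
  ⨅ (U : Set (Eu n)) (_ : IsOpen U ∧ A ⊆ U ∧ U ⊆ Ω), totVarOpen U u

/-- `g` is the weak (distributional) gradient of `u` on `Ω`. -/
def IsWeakGrad {n : ℕ} (Ω : Set (Eu n)) (u : Eu n → ℝ) (g : Eu n → Eu n) : Prop :=
  ∀ φ : Eu n → ℝ, ContDiff ℝ 1 φ → HasCompactSupport φ → tsupport φ ⊆ Ω →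
    ∀ i : Fin n,
      (∫ x in Ω, u x * (fderiv ℝ φ x (EuclideanSpace.single i 1))) =
        - ∫ x in Ω, g x i * φ x

/-- The Harjulehto–Hästö–Latvala mixed pseudo-modular
`ρ_{BV^{p(·)}(F)}(u) = ‖Du‖(F ∩ Y) + ∫_{F∖Y} |∇u|^{p(x)} dx`, where `Y = {p = 1}`
and `g` is the weak gradient of `u` on the Sobolev part. -/
def hhlModular {n : ℕ} (p : Eu n → ℝ) (Ω F : Set (Eu n)) (u : Eu n → ℝ)
    (g : Eu n → Eu n) : ℝ≥0∞ :=
  totVarIn Ω (F ∩ {x | p x = 1}) u +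
    ∫⁻ x in F \ {x | p x = 1}, ENNReal.ofReal (‖g x‖ ^ p x)

/-- The HHL mixed pseudo-modular for (smooth) functions whose gradient is `fderiv`. -/
def hhlModularSmooth {n : ℕ} (p : Eu n → ℝ) (Ω F : Set (Eu n)) (v : Eu n → ℝ) : ℝ≥0∞ :=
  totVarIn Ω (F ∩ {x | p x = 1}) v +
    ∫⁻ x in F \ {x | p x = 1}, ENNReal.ofReal (‖fderiv ℝ v x‖ ^ p x)

/-- Membership in the HHL space `BV^{p(·)}(Ω)`: `u ∈ L^{p(·)}(Ω)` and
`inf{λ > 0 : ρ_{BV^{p(·)}(Ω)}(u/λ) ≤ 1} < ∞`. -/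
def MemBVp {n : ℕ} (p : Eu n → ℝ) (Ω : Set (Eu n)) (u : Eu n → ℝ) : Prop :=
  MemLpVar p Ω u ∧
    ∃ g : Eu n → Eu n, IsWeakGrad (Ω \ {x | p x = 1}) u g ∧
      ∃ l : ℝ, 0 < l ∧
        hhlModular p Ω Ω (fun x => u x / l) (fun x => l⁻¹ • g x) ≤ 1

/-- Mollification `u_δ = φ_δ ∗ u` (with `u` extended by zero outside `Ω`),
where `φ_δ(z) = δ^{-n} φ(z/δ)`. -/
def mollify {n : ℕ} (Ω : Set (Eu n)) (u : Eu n → ℝ) (φ : Eu n → ℝ) (δ : ℝ)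
    (x : Eu n) : ℝ :=
  ∫ y in Ω, (δ ^ n)⁻¹ * φ (δ⁻¹ • (x - y)) * u y

/-- `p` is (locally) log-Hölder continuous on `Ω` with constant `c`. -/
def LogHolderOn {n : ℕ} (c : ℝ) (Ω : Set (Eu n)) (p : Eu n → ℝ) : Prop :=
  ∀ x ∈ Ω, ∀ y ∈ Ω, |p x - p y| ≤ c / Real.log (Real.exp 1 + 1 / dist x y)

/-- `p` is globally log-Hölder continuous on `ℝⁿ` with constant `c`. -/
def LogHolderGlobal {n : ℕ} (c : ℝ) (p : Eu n → ℝ) : Prop :=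
  LogHolderOn c Set.univ p ∧
    ∃ pinf : ℝ, 1 ≤ pinf ∧ ∀ x, |p x - pinf| ≤ c / Real.log (Real.exp 1 + ‖x‖)

/-- The variable exponent Sobolev capacity `C_{p(·)}(E)`: infimum of
`∫ |u|^{p(x)} + |∇u|^{p(x)} dx` over `u ∈ W^{1,p(·)}(ℝⁿ)` with `u ≥ 1` on an
open set containing `E`. -/
def sobolevCapacity {n : ℕ} (p : Eu n → ℝ) (E : Set (Eu n)) : ℝ≥0∞ :=
  ⨅ (u : Eu n → ℝ) (g : Eu n → Eu n)
    (_ : MemLpVar p Set.univ u ∧ IsWeakGrad Set.univ u g ∧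
         MemLpVar p Set.univ (fun x => ‖g x‖) ∧
         ∃ U : Set (Eu n), IsOpen U ∧ E ⊆ U ∧ ∀ x ∈ U, 1 ≤ u x),
    vModular p Set.univ u + ∫⁻ x, ENNReal.ofReal (‖g x‖ ^ p x)

/-!
Both summands of the norm are Luxemburg functionals `inf {λ > 0 : ρ (u / λ) ≤ 1}` of modulars
with `ρ (s • u) ≤ s ρ u` for `0 < s ≤ 1`, so small norm and `ρ (u / ε) ≤ 1` are interchangeable.
A `‖·‖`-Cauchy sequence is Cauchy in `L^{p(·)}`, which is complete by the Riesz–Fischer argument: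
a subsequence with `‖u_{k+1} - u_k‖ < 2⁻ᵏ` converges a.e., and Fatou's lemma for the modular
makes the a.e. limit `v` the `L^{p(·)}` limit. The relaxed modular is lower semicontinuous under
`L^{p(·)}` convergence (choose Lipschitz approximants diagonally), so `ρ̃ ((u_i - u_j) / ε) ≤ 1`
passes to `ρ̃ ((u_i - v) / ε) ≤ 1`. Finally `v ∈ B̃V` because the bound `p ≤ M` gives
`ρ̃ (a - b) < ∞` whenever `ρ̃ a, ρ̃ b < ∞`, by Rademacher's theorem for the approximants.
-/

lemma mul_rpow_le_of_le_one {s t q : ℝ} (hs0 : 0 ≤ s) (hs1 : s ≤ 1) (ht : 0 ≤ t) (hq : 1 ≤ q) :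
    (s * t) ^ q ≤ s * t ^ q := by
  rw [Real.mul_rpow hs0 ht]
  gcongr
  simpa using Real.rpow_le_rpow_of_exponent_ge' hs0 hs1 zero_le_one hq

lemma abs_le_add_mul_abs_div_rpow (t : ℝ) {c q : ℝ} (hc : 0 < c) (hq : 1 ≤ q) :
    |t| ≤ c + c * |t / c| ^ q := by
  rw [abs_div, abs_of_pos hc]
  rcases le_total (|t| / c) 1 with h | h
  · have : |t| ≤ c := (div_le_one hc).1 h
    nlinarith [Real.rpow_nonneg (div_nonneg (abs_nonneg t) hc.le) q]
  · have : |t| / c ≤ (|t| / c) ^ q := by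
      simpa using Real.rpow_le_rpow_of_exponent_le h hq
    have : |t| = c * (|t| / c) := by field_simp
    nlinarith

lemma norm_sub_div_two_rpow_le {E : Type*} [SeminormedAddCommGroup E] (x y : E) {q : ℝ}
    (hq : 0 ≤ q) : (‖x - y‖ / 2) ^ q ≤ ‖x‖ ^ q + ‖y‖ ^ q := by
  have hmax : ‖x - y‖ / 2 ≤ max ‖x‖ ‖y‖ := by
    have := norm_sub_le x y
    have := le_max_left ‖x‖ ‖y‖
    have := le_max_right ‖x‖ ‖y‖
    linarith
  calc (‖x - y‖ / 2) ^ q ≤ max ‖x‖ ‖y‖ ^ q := by gcongr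
    _ ≤ ‖x‖ ^ q + ‖y‖ ^ q := by
      rcases le_total ‖x‖ ‖y‖ with h | h
      · rw [max_eq_right h]; exact le_add_of_nonneg_left (by positivity)
      · rw [max_eq_left h]; exact le_add_of_nonneg_right (by positivity)

section Luxemburg

variable {α : Type*} {ρ : (α → ℝ) → ℝ≥0∞} {u : α → ℝ}

/-- Definitionally `luxNorm p Ω = luxemburg (vModular p Ω)` and
`bvNorm p Ω u = luxNorm p Ω u + luxemburg (bvModular p Ω) u`. -/
def luxemburg (ρ : (α → ℝ) → ℝ≥0∞) (u : α → ℝ) : ℝ :=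
  sInf {l : ℝ | 0 < l ∧ ρ (fun x => u x / l) ≤ 1}

lemma luxemburg_nonneg (ρ : (α → ℝ) → ℝ≥0∞) (u : α → ℝ) : 0 ≤ luxemburg ρ u :=
  Real.sInf_nonneg fun _ hl => hl.1.le

lemma luxemburg_le {l : ℝ} (hl : 0 < l) (h : ρ (fun x => u x / l) ≤ 1) : luxemburg ρ u ≤ l :=
  csInf_le ⟨0, fun _ hl => hl.1.le⟩ ⟨hl, h⟩

lemma luxemburg_const_mul {s : ℝ} (hs : 0 < s) :
    luxemburg ρ (fun x => s * u x) = s * luxemburg ρ u := by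
  rw [luxemburg, luxemburg, ← smul_eq_mul, ← Real.sInf_smul_of_nonneg hs.le]
  congr 1
  ext l
  simp only [Set.mem_smul_set, smul_eq_mul]
  constructor
  · rintro ⟨hl, h⟩
    refine ⟨l / s, ⟨div_pos hl hs, ?_⟩, mul_div_cancel₀ l hs.ne'⟩
    convert h using 3 with x
    rw [div_div_eq_mul_div, mul_comm]
  · rintro ⟨l, ⟨hl, h⟩, rfl⟩
    refine ⟨mul_pos hs hl, ?_⟩
    convert h using 3 with x
    rw [mul_div_mul_left _ _ hs.ne']

lemma tendsto_luxemburg_zero {f : ℕ → α → ℝ}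
    (h : ∀ ε : ℝ, 0 < ε → ∃ N, ∀ i ≥ N, ρ (fun x => f i x / ε) ≤ 1) :
    Tendsto (fun i => luxemburg ρ (f i)) atTop (𝓝 0) := by
  refine tendsto_order.2 ⟨fun a ha => Eventually.of_forall fun i =>
    ha.trans_le (luxemburg_nonneg ρ _), fun ε hε => ?_⟩
  obtain ⟨N, hN⟩ := h (ε / 2) (half_pos hε)
  exact eventually_atTop.2 ⟨N, fun i hi => (luxemburg_le (half_pos hε) (hN i hi)).trans_lt
    (half_lt_self hε)⟩

lemma modular_div_le_of_le (hρ : ∀ (w : α → ℝ) (s : ℝ), 0 < s → s ≤ 1 →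
      ρ (fun x => s * w x) ≤ ENNReal.ofReal s * ρ w) {l l' : ℝ} (hl : 0 < l) (hll' : l ≤ l') :
    ρ (fun x => u x / l') ≤ ENNReal.ofReal (l / l') * ρ (fun x => u x / l) := by
  have hl' : 0 < l' := hl.trans_le hll'
  convert hρ (fun x => u x / l) (l / l') (div_pos hl hl') ((div_le_one hl').2 hll') using 2
  field_simp

lemma modular_div_le_one_of_luxemburg_lt (hρ : ∀ (w : α → ℝ) (s : ℝ), 0 < s → s ≤ 1 →
      ρ (fun x => s * w x) ≤ ENNReal.ofReal s * ρ w)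
    (hu : ∃ l, 0 < l ∧ ρ (fun x => u x / l) ≤ 1) {c : ℝ} (hc : luxemburg ρ u < c) :
    ρ (fun x => u x / c) ≤ 1 := by
  obtain ⟨l, ⟨hl, hlu⟩, hlc⟩ := exists_lt_of_csInf_lt hu hc
  calc ρ (fun x => u x / c) ≤ ENNReal.ofReal (l / c) * ρ (fun x => u x / l) :=
        modular_div_le_of_le hρ hl hlc.le
    _ ≤ 1 * 1 := by
        gcongr
        exact ENNReal.ofReal_le_one.2 ((div_le_one (hl.trans hlc)).2 hlc.le)
    _ = 1 := one_mul 1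

lemma exists_modular_div_le_one (hρ : ∀ (w : α → ℝ) (s : ℝ), 0 < s → s ≤ 1 →
      ρ (fun x => s * w x) ≤ ENNReal.ofReal s * ρ w) (hu : ρ u < ⊤) :
    ∃ l, 0 < l ∧ ρ (fun x => u x / l) ≤ 1 := by
  set l := (ρ u).toReal + 1
  have hl : 1 ≤ l := le_add_of_nonneg_left ENNReal.toReal_nonneg
  refine ⟨l, zero_lt_one.trans_le hl, ?_⟩
  calc ρ (fun x => u x / l) ≤ ENNReal.ofReal (1 / l) * ρ (fun x => u x / 1) :=
        modular_div_le_of_le hρ one_pos hl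
    _ = ENNReal.ofReal (1 / l) * ENNReal.ofReal (ρ u).toReal := by
        simp only [div_one, ENNReal.ofReal_toReal hu.ne]
    _ ≤ ENNReal.ofReal (1 / l) * ENNReal.ofReal l := by
        gcongr
        exact le_add_of_nonneg_right zero_le_one
    _ = 1 := by
        rw [← ENNReal.ofReal_mul (by positivity), one_div_mul_cancel (by positivity),
          ENNReal.ofReal_one]

end Luxemburg

section VariableLebesgue

variable {n : ℕ} {p : Eu n → ℝ} {Ω : Set (Eu n)}

lemma vModular_congr_abs {u w : Eu n → ℝ} (h : ∀ x, |u x| = |w x|) :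
    vModular p Ω u = vModular p Ω w := by
  simp only [vModular, h]

lemma luxNorm_congr_abs {u w : Eu n → ℝ} (h : ∀ x, |u x| = |w x|) :
    luxNorm p Ω u = luxNorm p Ω w := by
  simp only [luxNorm, vModular, abs_div, h]

lemma luxNorm_sub_comm (a b : Eu n → ℝ) :
    luxNorm p Ω (fun x => a x - b x) = luxNorm p Ω (fun x => b x - a x) :=
  luxNorm_congr_abs fun _ => abs_sub_comm _ _

lemma luxNorm_const_mul (u : Eu n → ℝ) {s : ℝ} (hs : 0 < s) :
    luxNorm p Ω (fun x => s * u x) = s * luxNorm p Ω u :=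
  luxemburg_const_mul hs

lemma vModular_const_mul_le (hp1 : ∀ x ∈ Ω, 1 ≤ p x) (hΩ : MeasurableSet Ω) :
    ∀ (w : Eu n → ℝ) (s : ℝ), 0 < s → s ≤ 1 →
      vModular p Ω (fun x => s * w x) ≤ ENNReal.ofReal s * vModular p Ω w := by
  intro w s hs0 hs1
  rw [vModular, vModular, ← lintegral_const_mul' _ _ ENNReal.ofReal_ne_top]
  refine setLIntegral_mono' hΩ fun x hx => ?_
  rw [← ENNReal.ofReal_mul hs0.le, abs_mul, abs_of_pos hs0]
  exact ENNReal.ofReal_le_ofReal (mul_rpow_le_of_le_one hs0.le hs1 (abs_nonneg _) (hp1 x hx))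

lemma vModular_sub_div_le_one (hpm : Measurable p) (hp1 : ∀ x ∈ Ω, 1 ≤ p x)
    (hΩ : MeasurableSet Ω) {a b : Eu n → ℝ} (ha : Measurable a) {la lb : ℝ} (hla : 0 < la)
    (hlb : 0 < lb) (hA : vModular p Ω (fun x => a x / la) ≤ 1)
    (hB : vModular p Ω (fun x => b x / lb) ≤ 1) :
    vModular p Ω (fun x => (a x - b x) / (2 * (la + lb))) ≤ 1 := by
  have hρ := vModular_const_mul_le hp1 hΩ
  have hl : 0 < la + lb := add_pos hla hlb
  calc vModular p Ω (fun x => (a x - b x) / (2 * (la + lb)))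
      ≤ vModular p Ω (fun x => a x / (la + lb)) + vModular p Ω (fun x => b x / (la + lb)) := by
        rw [vModular, vModular, vModular,
          ← lintegral_add_left ((ha.div_const _).abs.pow hpm).ennreal_ofReal]
        refine setLIntegral_mono' hΩ fun x hx => ?_
        rw [← ENNReal.ofReal_add (by positivity) (by positivity)]
        refine ENNReal.ofReal_le_ofReal ?_
        have h := norm_sub_div_two_rpow_le (a x / (la + lb)) (b x / (la + lb))
          (zero_le_one.trans (hp1 x hx))
        rwa [Real.norm_eq_abs, Real.norm_eq_abs, Real.norm_eq_abs, ← abs_two, ← abs_div,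
          ← sub_div, div_div, mul_comm] at h
    _ ≤ ENNReal.ofReal (la / (la + lb)) * 1 + ENNReal.ofReal (lb / (la + lb)) * 1 := by
        gcongr
        · exact (modular_div_le_of_le hρ hla (le_add_of_nonneg_right hlb.le)).trans (by gcongr)
        · exact (modular_div_le_of_le hρ hlb (le_add_of_nonneg_left hla.le)).trans (by gcongr)
    _ = 1 := by
        rw [mul_one, mul_one, ← ENNReal.ofReal_add (by positivity) (by positivity), ← add_div,
          div_self hl.ne', ENNReal.ofReal_one]

lemma vModular_le_liminf (hpm : Measurable p) (hp0 : ∀ x ∈ Ω, 0 ≤ p x) (hΩ : MeasurableSet Ω)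
    {W : ℕ → Eu n → ℝ} {w : Eu n → ℝ} (hW : ∀ k, Measurable (W k))
    (hlim : ∀ᵐ x ∂volume.restrict Ω, Tendsto (fun k => W k x) atTop (𝓝 (w x))) :
    vModular p Ω w ≤ liminf (fun k => vModular p Ω (W k)) atTop := by
  calc vModular p Ω w = ∫⁻ x in Ω, liminf (fun k => ENNReal.ofReal (|W k x| ^ p x)) atTop := by
        refine lintegral_congr_ae ?_
        filter_upwards [hlim, ae_restrict_mem hΩ] with x hx hxΩ
        have hcont : Continuous fun t : ℝ => ENNReal.ofReal (|t| ^ p x) :=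
          ENNReal.continuous_ofReal.comp
            ((Real.continuous_rpow_const (hp0 x hxΩ)).comp continuous_abs)
        exact ((hcont.tendsto (w x)).comp hx).liminf_eq.symm
    _ ≤ _ := lintegral_liminf_le fun k => ((hW k).abs.pow hpm).ennreal_ofReal

lemma MemLpVar.exists_vModular_div_le_one (hp1 : ∀ x ∈ Ω, 1 ≤ p x) (hΩ : MeasurableSet Ω)
    {u : Eu n → ℝ} (hu : MemLpVar p Ω u) : ∃ l, 0 < l ∧ vModular p Ω (fun x => u x / l) ≤ 1 := by
  obtain ⟨-, l₀, hl₀, hfin⟩ := hu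
  obtain ⟨l, hl, h⟩ := exists_modular_div_le_one (vModular_const_mul_le hp1 hΩ) hfin
  exact ⟨l₀ * l, mul_pos hl₀ hl, by simpa only [div_div] using h⟩

lemma MemLpVar.sub (hpm : Measurable p) (hp1 : ∀ x ∈ Ω, 1 ≤ p x) (hΩ : MeasurableSet Ω)
    {a b : Eu n → ℝ} (ha : MemLpVar p Ω a) (hb : MemLpVar p Ω b) :
    MemLpVar p Ω (fun x => a x - b x) := by
  obtain ⟨la, hla, hA⟩ := ha.exists_vModular_div_le_one hp1 hΩ
  obtain ⟨lb, hlb, hB⟩ := hb.exists_vModular_div_le_one hp1 hΩ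
  exact ⟨ha.1.sub hb.1, _, by positivity,
    (vModular_sub_div_le_one hpm hp1 hΩ ha.1 hla hlb hA hB).trans_lt ENNReal.one_lt_top⟩

lemma MemLpVar.const_mul {u : Eu n → ℝ} (hu : MemLpVar p Ω u) {s : ℝ} (hs : s ≠ 0) :
    MemLpVar p Ω (fun x => s * u x) := by
  obtain ⟨hum, l, hl, hfin⟩ := hu
  refine ⟨hum.const_mul s, |s| * l, mul_pos (abs_pos.2 hs) hl, ?_⟩
  convert hfin using 1
  refine vModular_congr_abs fun x => ?_
  rw [abs_div, abs_div, abs_mul, abs_mul, abs_abs, mul_div_mul_left _ _ (abs_ne_zero.2 hs)]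

lemma MemLpVar.div_const {u : Eu n → ℝ} (hu : MemLpVar p Ω u) {c : ℝ} (hc : c ≠ 0) :
    MemLpVar p Ω (fun x => u x / c) := by
  simpa only [div_eq_inv_mul] using hu.const_mul (inv_ne_zero hc)

lemma luxNorm_sub_le (hpm : Measurable p) (hp1 : ∀ x ∈ Ω, 1 ≤ p x) (hΩ : MeasurableSet Ω)
    {a b : Eu n → ℝ} (ha : MemLpVar p Ω a) (hb : MemLpVar p Ω b) :
    luxNorm p Ω (fun x => a x - b x) ≤ 2 * (luxNorm p Ω a + luxNorm p Ω b) := by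
  have hρ := vModular_const_mul_le hp1 hΩ
  refine le_of_forall_pos_le_add fun ε hε => ?_
  have hla : 0 < luxNorm p Ω a + ε / 4 :=
    add_pos_of_nonneg_of_pos (luxemburg_nonneg _ _) (by positivity)
  have hlb : 0 < luxNorm p Ω b + ε / 4 :=
    add_pos_of_nonneg_of_pos (luxemburg_nonneg _ _) (by positivity)
  have hA := modular_div_le_one_of_luxemburg_lt hρ (ha.exists_vModular_div_le_one hp1 hΩ)
    (lt_add_of_pos_right (luxNorm p Ω a) (by positivity : 0 < ε / 4))
  have hB := modular_div_le_one_of_luxemburg_lt hρ (hb.exists_vModular_div_le_one hp1 hΩ)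
    (lt_add_of_pos_right (luxNorm p Ω b) (by positivity : 0 < ε / 4))
  calc luxNorm p Ω (fun x => a x - b x)
      ≤ 2 * ((luxNorm p Ω a + ε / 4) + (luxNorm p Ω b + ε / 4)) :=
        luxemburg_le (by positivity) (vModular_sub_div_le_one hpm hp1 hΩ ha.1 hla hlb hA hB)
    _ = 2 * (luxNorm p Ω a + luxNorm p Ω b) + ε := by ring

lemma LpTendsto.const_mul {v : ℕ → Eu n → ℝ} {u : Eu n → ℝ} (h : LpTendsto p Ω v u) {s : ℝ}
    (hs : 0 < s) : LpTendsto p Ω (fun k x => s * v k x) (fun x => s * u x) := by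
  have key : ∀ k, luxNorm p Ω (fun x => s * v k x - s * u x) =
      s * luxNorm p Ω (fun x => v k x - u x) := fun k => by
    simp only [← mul_sub]
    exact luxNorm_const_mul _ hs
  unfold LpTendsto
  simpa only [key, mul_zero] using Tendsto.const_mul s h

lemma LpTendsto.const_sub_div {v : ℕ → Eu n → ℝ} {u : Eu n → ℝ} (h : LpTendsto p Ω v u)
    (a : Eu n → ℝ) {ε : ℝ} (hε : 0 < ε) :
    LpTendsto p Ω (fun k x => (a x - v k x) / ε) (fun x => (a x - u x) / ε) :=
  (h.const_mul (inv_pos.2 hε)).congr fun k => luxNorm_congr_abs fun x => by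
    rw [← abs_neg]
    ring_nf

lemma LpTendsto.sub (hpm : Measurable p) (hp1 : ∀ x ∈ Ω, 1 ≤ p x) (hΩ : MeasurableSet Ω)
    {v w : ℕ → Eu n → ℝ} {a b : Eu n → ℝ} (hv : LpTendsto p Ω v a) (hw : LpTendsto p Ω w b)
    (hvm : ∀ k, MemLpVar p Ω (v k)) (hwm : ∀ k, MemLpVar p Ω (w k)) (ha : MemLpVar p Ω a)
    (hb : MemLpVar p Ω b) :
    LpTendsto p Ω (fun k x => v k x - w k x) (fun x => a x - b x) := by
  have key : ∀ k, luxNorm p Ω (fun x => (v k x - w k x) - (a x - b x)) ≤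
      2 * (luxNorm p Ω (fun x => v k x - a x) + luxNorm p Ω (fun x => w k x - b x)) := by
    intro k
    calc luxNorm p Ω (fun x => (v k x - w k x) - (a x - b x))
        = luxNorm p Ω (fun x => (v k x - a x) - (w k x - b x)) := by
          congr 1
          funext x
          ring
      _ ≤ _ := luxNorm_sub_le hpm hp1 hΩ ((hvm k).sub hpm hp1 hΩ ha) ((hwm k).sub hpm hp1 hΩ hb)
  refine squeeze_zero (fun k => luxemburg_nonneg _ _) key ?_
  simpa only [add_zero, mul_zero] using (Tendsto.add hv hw).const_mul 2

lemma ae_summable_of_vModular_div_le_one (hpm : Measurable p) (hp1 : ∀ x ∈ Ω, 1 ≤ p x)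
    (hΩ : MeasurableSet Ω) {d : ℕ → Eu n → ℝ} {c : ℕ → ℝ} (hd : ∀ k, Measurable (d k))
    (hc : ∀ k, 0 < c k) (hcs : Summable c)
    (hmod : ∀ k, vModular p Ω (fun x => d k x / c k) ≤ 1) :
    ∀ᵐ x ∂volume.restrict Ω, Summable fun k => |d k x| := by
  set g : ℕ → Eu n → ℝ≥0∞ := fun k x => ENNReal.ofReal (c k * |d k x / c k| ^ p x)
  have hg : ∀ k, Measurable (g k) := fun k =>
    (measurable_const.mul (((hd k).div_const _).abs.pow hpm)).ennreal_ofReal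
  have hint : ∀ k, ∫⁻ x in Ω, g k x ≤ ENNReal.ofReal (c k) := fun k =>
    calc ∫⁻ x in Ω, g k x = ENNReal.ofReal (c k) * vModular p Ω (fun x => d k x / c k) := by
          rw [vModular, ← lintegral_const_mul' _ _ ENNReal.ofReal_ne_top]
          simp only [g, ENNReal.ofReal_mul (hc k).le]
      _ ≤ ENNReal.ofReal (c k) := mul_le_of_le_one_right' (hmod k)
  have hsum : ∫⁻ x in Ω, ∑' k, g k x ≠ ⊤ := by
    rw [lintegral_tsum fun k => (hg k).aemeasurable]
    refine ne_top_of_le_ne_top ?_ (ENNReal.tsum_le_tsum hint)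
    rw [← ENNReal.ofReal_tsum_of_nonneg (fun k => (hc k).le) hcs]
    exact ENNReal.ofReal_ne_top
  filter_upwards [ae_lt_top' (Measurable.tsum hg).aemeasurable hsum,
    ae_restrict_mem hΩ] with x hx hxΩ
  refine Summable.of_nonneg_of_le (fun k => abs_nonneg _) (fun k => ?_)
    (hcs.add (ENNReal.summable_toReal hx.ne))
  rw [ENNReal.toReal_ofReal (mul_nonneg (hc k).le (by positivity))]
  exact abs_le_add_mul_abs_div_rpow _ (hc k) (hp1 x hxΩ)

lemma exists_ae_tendsto_of_luxNorm_sub_lt (hpm : Measurable p) (hp1 : ∀ x ∈ Ω, 1 ≤ p x)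
    (hΩ : MeasurableSet Ω) {u : ℕ → Eu n → ℝ} (hu : ∀ k, MemLpVar p Ω (u k))
    (h : ∀ k, luxNorm p Ω (fun x => u (k + 1) x - u k x) < 2⁻¹ ^ k) :
    ∃ v, Measurable v ∧ ∀ᵐ x ∂volume.restrict Ω, Tendsto (fun k => u k x) atTop (𝓝 (v x)) := by
  have hmod : ∀ k, vModular p Ω (fun x => (u (k + 1) x - u k x) / 2⁻¹ ^ k) ≤ 1 := fun k =>
    modular_div_le_one_of_luxemburg_lt (vModular_const_mul_le hp1 hΩ)
      (((hu (k + 1)).sub hpm hp1 hΩ (hu k)).exists_vModular_div_le_one hp1 hΩ) (h k)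
  have hsum := ae_summable_of_vModular_div_le_one hpm hp1 hΩ
    (fun k => (hu (k + 1)).1.sub (hu k).1) (fun k => by positivity)
    (summable_geometric_of_lt_one (by norm_num) (by norm_num)) hmod
  refine measurable_limit_of_tendsto_metrizable_ae (fun k => (hu k).1.aemeasurable) ?_
  filter_upwards [hsum] with x hx
  refine cauchySeq_tendsto_of_complete (cauchySeq_of_summable_dist (hx.congr fun k => ?_))
  rw [dist_comm, Real.dist_eq]
  rfl

theorem exists_lpTendsto_of_cauchy (hpm : Measurable p) (hp1 : ∀ x ∈ Ω, 1 ≤ p x)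
    (hΩ : MeasurableSet Ω) {u : ℕ → Eu n → ℝ} (hu : ∀ i, MemLpVar p Ω (u i))
    (hcau : ∀ ε : ℝ, 0 < ε → ∃ N, ∀ i ≥ N, ∀ j ≥ N, luxNorm p Ω (fun x => u i x - u j x) < ε) :
    ∃ v, MemLpVar p Ω v ∧ LpTendsto p Ω u v := by
  obtain ⟨φ, hφ, hφN⟩ := extraction_forall_of_eventually' fun k =>
    (hcau (2⁻¹ ^ k) (by positivity)).imp fun N hN m hm i hi j hj =>
      hN i (hm.trans hi) j (hm.trans hj)
  obtain ⟨v, hvm, hlim⟩ := exists_ae_tendsto_of_luxNorm_sub_lt hpm hp1 hΩ (fun k => hu (φ k))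
    fun k => hφN k _ (hφ (Nat.lt_succ_self k)).le _ le_rfl
  have hmod : ∀ ε : ℝ, 0 < ε → ∃ N, ∀ i ≥ N, vModular p Ω (fun x => (u i x - v x) / ε) ≤ 1 := by
    intro ε hε
    obtain ⟨N, hN⟩ := hcau ε hε
    refine ⟨N, fun i hi => ?_⟩
    calc vModular p Ω (fun x => (u i x - v x) / ε)
        ≤ liminf (fun k => vModular p Ω (fun x => (u i x - u (φ k) x) / ε)) atTop :=
          vModular_le_liminf hpm (fun x hx => zero_le_one.trans (hp1 x hx)) hΩ
            (fun k => ((hu i).1.sub (hu (φ k)).1).div_const ε)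
            (hlim.mono fun x hx => (hx.const_sub (u i x)).div_const ε)
      _ ≤ 1 := liminf_le_of_frequently_le' <| Eventually.frequently <|
          eventually_atTop.2 ⟨N, fun k hk =>
            modular_div_le_one_of_luxemburg_lt (vModular_const_mul_le hp1 hΩ)
            (((hu i).sub hpm hp1 hΩ (hu _)).exists_vModular_div_le_one hp1 hΩ)
            (hN i hi _ (hk.trans (hφ.id_le k)))⟩
  have hv : MemLpVar p Ω v := by
    obtain ⟨N, hN⟩ := hmod 1 one_pos
    have hNv : MemLpVar p Ω (fun x => u N x - v x) :=
      ⟨(hu N).1.sub hvm, 1, one_pos, (hN N le_rfl).trans_lt ENNReal.one_lt_top⟩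
    simpa only [_root_.sub_sub_cancel] using (hu N).sub hpm hp1 hΩ hNv
  exact ⟨v, hv, tendsto_luxemburg_zero hmod⟩

end VariableLebesgue

theorem LocallyLipschitzOn.ae_differentiableAt {E F : Type*} [NormedAddCommGroup E]
    [NormedSpace ℝ E] [FiniteDimensional ℝ E] [MeasurableSpace E] [BorelSpace E]
    [NormedAddCommGroup F] [NormedSpace ℝ F] [FiniteDimensional ℝ F] {μ : Measure E}
    [μ.IsAddHaarMeasure] {s : Set E} {f : E → F} (hf : LocallyLipschitzOn s f) (hs : IsOpen s) :
    ∀ᵐ x ∂μ, x ∈ s → DifferentiableAt ℝ f x := by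
  rw [ae_iff]
  refine measure_null_of_locally_null _ fun x hx => ?_
  obtain ⟨K, t, ht, hK⟩ := hf (Classical.not_imp.1 hx).1
  rw [hs.nhdsWithin_eq (Classical.not_imp.1 hx).1] at ht
  refine ⟨_, inter_mem_nhdsWithin _ (interior_mem_nhds.2 ht),
    measure_mono_null (fun y ⟨hy, hyt⟩ => ?_)
      (ae_iff.1 (hK.ae_differentiableWithinAt_of_mem (μ := μ)))⟩
  exact fun hdiff => (Classical.not_imp.1 hy).2
    ((hdiff (interior_subset hyt)).differentiableAt (mem_interior_iff_mem_nhds.1 hyt))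

section Gradient

variable {n : ℕ} {p : Eu n → ℝ} {Ω : Set (Eu n)}

lemma LocLipOn.locallyLipschitzOn {u : Eu n → ℝ} (h : LocLipOn Ω u) :
    LocallyLipschitzOn Ω u :=
  fun _ hx => h _ hx

lemma LocLipOn.const_mul {u : Eu n → ℝ} (h : LocLipOn Ω u) (s : ℝ) :
    LocLipOn Ω (fun x => s * u x) := fun x hx => by
  obtain ⟨K, t, ht, hK⟩ := h x hx
  exact ⟨‖s‖₊ * K, t, ht, (lipschitzWith_smul s).comp_lipschitzOnWith hK⟩

lemma LocLipOn.sub {a b : Eu n → ℝ} (ha : LocLipOn Ω a) (hb : LocLipOn Ω b) :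
    LocLipOn Ω (fun x => a x - b x) :=
  fun _ hx => ha.locallyLipschitzOn.sub hb.locallyLipschitzOn hx

lemma gradModular_const_mul_le (hp1 : ∀ x ∈ Ω, 1 ≤ p x) (hΩ : MeasurableSet Ω) (u : Eu n → ℝ)
    {s : ℝ} (hs0 : 0 ≤ s) (hs1 : s ≤ 1) :
    gradModular p Ω (fun x => s * u x) ≤ ENNReal.ofReal s * gradModular p Ω u := by
  rw [gradModular, gradModular, ← lintegral_const_mul' _ _ ENNReal.ofReal_ne_top]
  refine setLIntegral_mono' hΩ fun x hx => ?_
  rw [← ENNReal.ofReal_mul hs0, show (fun x => s * u x) = s • u from rfl,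
    fderiv_const_smul_field, Pi.smul_apply, norm_smul, Real.norm_eq_abs, abs_of_nonneg hs0]
  exact ENNReal.ofReal_le_ofReal (mul_rpow_le_of_le_one hs0 hs1 (norm_nonneg _) (hp1 x hx))

lemma gradModular_sub_le (hpm : Measurable p) (hp1 : ∀ x ∈ Ω, 1 ≤ p x) (hΩ : IsOpen Ω) {M : ℝ}
    (hM : ∀ x ∈ Ω, p x ≤ M) {a b : Eu n → ℝ} (ha : LocLipOn Ω a) (hb : LocLipOn Ω b) :
    gradModular p Ω (fun x => a x - b x) ≤
      ENNReal.ofReal (2 ^ M) * (gradModular p Ω a + gradModular p Ω b) := by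
  rw [gradModular, gradModular, gradModular,
    ← lintegral_add_left ((measurable_fderiv ℝ a).norm.pow hpm).ennreal_ofReal,
    ← lintegral_const_mul' _ _ ENNReal.ofReal_ne_top]
  refine setLIntegral_mono_ae' hΩ.measurableSet ?_
  filter_upwards [ha.locallyLipschitzOn.ae_differentiableAt hΩ,
    hb.locallyLipschitzOn.ae_differentiableAt hΩ] with x hax hbx hx
  have hq : 0 ≤ p x := zero_le_one.trans (hp1 x hx)
  rw [show (fun x => a x - b x) = a - b from rfl, fderiv_sub (hax hx) (hbx hx),
    ← ENNReal.ofReal_add (by positivity) (by positivity), ← ENNReal.ofReal_mul (by positivity)]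
  refine ENNReal.ofReal_le_ofReal ?_
  calc ‖fderiv ℝ a x - fderiv ℝ b x‖ ^ p x
      = 2 ^ p x * (‖fderiv ℝ a x - fderiv ℝ b x‖ / 2) ^ p x := by
        rw [← Real.mul_rpow zero_le_two (by positivity), mul_div_cancel₀ _ two_ne_zero]
    _ ≤ 2 ^ M * (‖fderiv ℝ a x‖ ^ p x + ‖fderiv ℝ b x‖ ^ p x) := by
        gcongr
        · exact one_le_two
        · exact hM x hx
        · exact norm_sub_div_two_rpow_le _ _ hq

end Gradient

section BV

variable {n : ℕ} {p : Eu n → ℝ} {Ω : Set (Eu n)}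

/-- The index set of the infimum defining `bvModular p Ω u`. -/
def IsLipApprox (p : Eu n → ℝ) (Ω : Set (Eu n)) (v : ℕ → Eu n → ℝ) (u : Eu n → ℝ) : Prop :=
  (∀ i, LocLipOn Ω (v i) ∧ MemLpVar p Ω (v i)) ∧ LpTendsto p Ω v u

lemma bvModular_le_liminf_gradModular {v : ℕ → Eu n → ℝ} {u : Eu n → ℝ}
    (hv : IsLipApprox p Ω v u) :
    bvModular p Ω u ≤ liminf (fun i => gradModular p Ω (v i)) atTop :=
  iInf₂_le v hv

lemma exists_isLipApprox_gradModular_lt {u : Eu n → ℝ} {B : ℝ≥0∞} (h : bvModular p Ω u < B) :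
    ∃ v, IsLipApprox p Ω v u ∧ ∀ k, gradModular p Ω (v k) < B := by
  obtain ⟨v, hv, hvB⟩ : ∃ v, IsLipApprox p Ω v u ∧
      liminf (fun i => gradModular p Ω (v i)) atTop < B := by
    simpa only [bvModular, IsLipApprox, iInf_lt_iff, exists_prop] using h
  obtain ⟨ψ, hψ, hψB⟩ :=
    extraction_of_frequently_atTop (frequently_lt_of_liminf_lt (by isBoundedDefault) hvB)
  exact ⟨fun k => v (ψ k), ⟨fun k => hv.1 (ψ k), hv.2.comp hψ.tendsto_atTop⟩, hψB⟩

lemma IsLipApprox.const_mul {v : ℕ → Eu n → ℝ} {u : Eu n → ℝ} (h : IsLipApprox p Ω v u)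
    {s : ℝ} (hs : 0 < s) : IsLipApprox p Ω (fun k x => s * v k x) (fun x => s * u x) :=
  ⟨fun k => ⟨(h.1 k).1.const_mul s, (h.1 k).2.const_mul hs.ne'⟩, h.2.const_mul hs⟩

lemma IsLipApprox.sub (hpm : Measurable p) (hp1 : ∀ x ∈ Ω, 1 ≤ p x) (hΩ : MeasurableSet Ω)
    {v w : ℕ → Eu n → ℝ} {a b : Eu n → ℝ} (hv : IsLipApprox p Ω v a) (hw : IsLipApprox p Ω w b)
    (ha : MemLpVar p Ω a) (hb : MemLpVar p Ω b) :
    IsLipApprox p Ω (fun k x => v k x - w k x) (fun x => a x - b x) :=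
  ⟨fun k => ⟨(hv.1 k).1.sub (hw.1 k).1, (hv.1 k).2.sub hpm hp1 hΩ (hw.1 k).2⟩,
    hv.2.sub hpm hp1 hΩ hw.2 (fun k => (hv.1 k).2) (fun k => (hw.1 k).2) ha hb⟩

lemma bvModular_const_mul_le (hp1 : ∀ x ∈ Ω, 1 ≤ p x) (hΩ : MeasurableSet Ω) :
    ∀ (u : Eu n → ℝ) (s : ℝ), 0 < s → s ≤ 1 →
      bvModular p Ω (fun x => s * u x) ≤ ENNReal.ofReal s * bvModular p Ω u := by
  intro u s hs0 hs1
  calc bvModular p Ω (fun x => s * u x)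
      ≤ ⨅ (v) (_ : IsLipApprox p Ω v u),
          ENNReal.ofReal s * liminf (fun i => gradModular p Ω (v i)) atTop := by
        refine le_iInf₂ fun v hv => ?_
        calc bvModular p Ω (fun x => s * u x)
            ≤ liminf (fun i => gradModular p Ω (fun x => s * v i x)) atTop :=
              bvModular_le_liminf_gradModular (hv.const_mul hs0)
          _ ≤ liminf (fun i => ENNReal.ofReal s * gradModular p Ω (v i)) atTop :=
              liminf_le_liminf (Eventually.of_forall fun i =>
                gradModular_const_mul_le hp1 hΩ _ hs0.le hs1)
          _ = _ := ENNReal.liminf_const_mul_of_ne_top ENNReal.ofReal_ne_top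
    _ = ENNReal.ofReal s * bvModular p Ω u := by
        simp only [bvModular, IsLipApprox,
          ENNReal.mul_iInf_of_ne (ENNReal.ofReal_pos.2 hs0).ne' ENNReal.ofReal_ne_top]

lemma bvModular_sub_lt_top (hpm : Measurable p) (hp1 : ∀ x ∈ Ω, 1 ≤ p x) (hΩ : IsOpen Ω)
    {M : ℝ} (hM : ∀ x ∈ Ω, p x ≤ M) {a b : Eu n → ℝ} (ha : MemBVt p Ω a) (hb : MemBVt p Ω b) :
    bvModular p Ω (fun x => a x - b x) < ⊤ := by
  obtain ⟨v, hv, hvB⟩ :=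
    exists_isLipApprox_gradModular_lt (ENNReal.lt_add_right ha.2.ne one_ne_zero)
  obtain ⟨w, hw, hwB⟩ :=
    exists_isLipApprox_gradModular_lt (ENNReal.lt_add_right hb.2.ne one_ne_zero)
  calc bvModular p Ω (fun x => a x - b x)
      ≤ liminf (fun k => gradModular p Ω (fun x => v k x - w k x)) atTop :=
        bvModular_le_liminf_gradModular (hv.sub hpm hp1 hΩ.measurableSet hw ha.1 hb.1)
    _ ≤ ENNReal.ofReal (2 ^ M) * ((bvModular p Ω a + 1) + (bvModular p Ω b + 1)) :=
        liminf_le_of_frequently_le' <| Frequently.of_forall fun k =>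
          (gradModular_sub_le hpm hp1 hΩ hM (hv.1 k).1 (hw.1 k).1).trans
            (by gcongr; exacts [(hvB k).le, (hwB k).le])
    _ < ⊤ := ENNReal.mul_lt_top ENNReal.ofReal_lt_top <| ENNReal.add_lt_top.2
        ⟨ENNReal.add_lt_top.2 ⟨ha.2, ENNReal.one_lt_top⟩,
          ENNReal.add_lt_top.2 ⟨hb.2, ENNReal.one_lt_top⟩⟩

lemma bvModular_sub_div_le_one_of_bvNorm_lt (hpm : Measurable p) (hp1 : ∀ x ∈ Ω, 1 ≤ p x)
    (hΩ : IsOpen Ω) {M : ℝ} (hM : ∀ x ∈ Ω, p x ≤ M) {a b : Eu n → ℝ} (ha : MemBVt p Ω a)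
    (hb : MemBVt p Ω b) {ε : ℝ} (h : bvNorm p Ω (fun x => a x - b x) < ε) :
    bvModular p Ω (fun x => (a x - b x) / ε) ≤ 1 :=
  -- `bvNorm < ε` bounds the modular only once its defining set is nonempty (`sInf ∅ = 0`).
  modular_div_le_one_of_luxemburg_lt (bvModular_const_mul_le hp1 hΩ.measurableSet)
    (exists_modular_div_le_one (bvModular_const_mul_le hp1 hΩ.measurableSet)
      (bvModular_sub_lt_top hpm hp1 hΩ hM ha hb))
    ((le_add_of_nonneg_left (luxemburg_nonneg _ _)).trans_lt h)

lemma bvModular_le_of_lpTendsto (hpm : Measurable p) (hp1 : ∀ x ∈ Ω, 1 ≤ p x)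
    (hΩ : MeasurableSet Ω) {W : ℕ → Eu n → ℝ} {w : Eu n → ℝ} (hW : ∀ j, MemLpVar p Ω (W j))
    (hw : MemLpVar p Ω w) (hlim : LpTendsto p Ω W w) {B : ℝ≥0∞}
    (hB : ∀ j, bvModular p Ω (W j) < B) :
    bvModular p Ω w ≤ B := by
  choose v hv hvB using fun j => exists_isLipApprox_gradModular_lt (hB j)
  choose k hk using fun j =>
    ((hv j).2.eventually (gt_mem_nhds (by positivity : (0 : ℝ) < 2⁻¹ ^ j))).exists
  have hdiag : LpTendsto p Ω (fun j => v j (k j)) w := by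
    have key : ∀ j, luxNorm p Ω (fun x => v j (k j) x - w x) ≤
        2 * (2⁻¹ ^ j + luxNorm p Ω (fun x => W j x - w x)) := fun j =>
      calc luxNorm p Ω (fun x => v j (k j) x - w x)
          = luxNorm p Ω (fun x => (v j (k j) x - W j x) - (w x - W j x)) := by
            congr 1
            funext x
            ring
        _ ≤ 2 * (luxNorm p Ω (fun x => v j (k j) x - W j x) +
              luxNorm p Ω (fun x => w x - W j x)) :=
            luxNorm_sub_le hpm hp1 hΩ (((hv j).1 (k j)).2.sub hpm hp1 hΩ (hW j))
              (hw.sub hpm hp1 hΩ (hW j))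
        _ ≤ _ := by
            rw [luxNorm_sub_comm w (W j)]
            gcongr
            exact (hk j).le
    refine squeeze_zero (fun j => luxemburg_nonneg _ _) key ?_
    simpa only [add_zero, mul_zero] using
      ((_root_.tendsto_pow_atTop_nhds_zero_of_lt_one (r := (2⁻¹ : ℝ)) (by norm_num)
        (by norm_num)).add hlim).const_mul 2
  exact (bvModular_le_liminf_gradModular ⟨fun j => (hv j).1 (k j), hdiag⟩).trans
    (liminf_le_of_frequently_le' (Frequently.of_forall fun j => (hvB j (k j)).le))

theorem bvModular_le_liminf (hpm : Measurable p) (hp1 : ∀ x ∈ Ω, 1 ≤ p x)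
    (hΩ : MeasurableSet Ω) {W : ℕ → Eu n → ℝ} {w : Eu n → ℝ} (hW : ∀ j, MemLpVar p Ω (W j))
    (hw : MemLpVar p Ω w) (hlim : LpTendsto p Ω W w) :
    bvModular p Ω w ≤ liminf (fun j => bvModular p Ω (W j)) atTop := by
  refine le_of_forall_gt_imp_ge_of_dense fun B hB => ?_
  obtain ⟨ψ, hψ, hψB⟩ :=
    extraction_of_frequently_atTop (frequently_lt_of_liminf_lt (by isBoundedDefault) hB)
  exact bvModular_le_of_lpTendsto hpm hp1 hΩ (fun j => hW (ψ j)) hw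
    (hlim.comp hψ.tendsto_atTop) hψB

end BV

/-- `B̃V^{p(·)}(Ω)` is a Banach space: every Cauchy sequence in
the norm `‖·‖_{B̃V}` converges to an element of the space. -/
theorem bvSpace_complete
    {n : ℕ} (p : Eu n → ℝ) (Ω : Set (Eu n)) (hΩ : IsOpen Ω)
    (hpm : Measurable p) (hp1 : ∀ x ∈ Ω, 1 ≤ p x) (hpb : ∃ M : ℝ, ∀ x ∈ Ω, p x ≤ M) :
    ∀ u : ℕ → Eu n → ℝ, (∀ i, MemBVt p Ω (u i)) →
      (∀ ε : ℝ, 0 < ε → ∃ N : ℕ, ∀ i ≥ N, ∀ j ≥ N,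
        bvNorm p Ω (fun x => u i x - u j x) < ε) →
      ∃ v : Eu n → ℝ, MemBVt p Ω v ∧
        Tendsto (fun i => bvNorm p Ω (fun x => u i x - v x)) atTop (𝓝 0) := by
  intro u hu hcau
  obtain ⟨M, hM⟩ := hpb
  have hΩm := hΩ.measurableSet
  obtain ⟨v, hv, hlim⟩ := exists_lpTendsto_of_cauchy hpm hp1 hΩm (fun i => (hu i).1)
    fun ε hε => (hcau ε hε).imp fun N hN i hi j hj =>
      (le_add_of_nonneg_right (luxemburg_nonneg _ _)).trans_lt (hN i hi j hj)
  have hmod : ∀ ε : ℝ, 0 < ε → ∃ N, ∀ i ≥ N,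
      bvModular p Ω (fun x => (u i x - v x) / ε) ≤ 1 := by
    intro ε hε
    obtain ⟨N, hN⟩ := hcau ε hε
    refine ⟨N, fun i hi => ?_⟩
    calc bvModular p Ω (fun x => (u i x - v x) / ε)
        ≤ liminf (fun j => bvModular p Ω (fun x => (u i x - u j x) / ε)) atTop :=
          bvModular_le_liminf hpm hp1 hΩm
            (fun j => ((hu i).1.sub hpm hp1 hΩm (hu j).1).div_const hε.ne')
            (((hu i).1.sub hpm hp1 hΩm hv).div_const hε.ne') (hlim.const_sub_div (u i) hε)
      _ ≤ 1 := liminf_le_of_frequently_le' <| Eventually.frequently <|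
          eventually_atTop.2 ⟨N, fun j hj => bvModular_sub_div_le_one_of_bvNorm_lt
            hpm hp1 hΩ hM (hu i) (hu j) (hN i hi j hj)⟩
  have hvBV : bvModular p Ω v < ⊤ := by
    obtain ⟨N, hN⟩ := hmod 1 one_pos
    have hNv : MemBVt p Ω (fun x => u N x - v x) :=
      ⟨(hu N).1.sub hpm hp1 hΩm hv,
        by simpa only [div_one] using (hN N le_rfl).trans_lt ENNReal.one_lt_top⟩
    simpa only [_root_.sub_sub_cancel] using bvModular_sub_lt_top hpm hp1 hΩ hM (hu N) hNv
  have hconv := Tendsto.add hlim (tendsto_luxemburg_zero hmod)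
  rw [add_zero] at hconv
  exact ⟨v, ⟨hv, hvBV⟩, hconv⟩
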